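/- arXiv:0809.1395 — 3 statements merged into one kernel-verified Lean document; each statement's English description precedes it below -/
import Mathlib

section
/- If x, y, z ∈ Z[G12] satisfy x·u12 + y·b1 + z·b2 = 0 in A_2(G12), then there exist y', y'', z', z'' ∈ Z[G12] such that x = z'·N2 + y'·N1, y = −(σ2−1)·y' + (σ1−1)·y'' and z = (σ1−1)·z' + (σ2−1)·z''. Equivalently, the relations among u12, b1, b2 are generated over Z[G12] by (σ1−1)·b1 = 0, (σ2−1)·b2 = 0, (σ2−1)·b1 = N1·u12 and −(σ1−1)·b2 = N2·u12. -/
open MonoidAlgebra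

set_option maxHeartbeats 1000000
set_option synthInstance.maxHeartbeats 400000

noncomputable section

/-! ## Generic (unbundled) group-cohomology notions in low degree -/

/-- `f : G → A` is a 1-cocycle for the (unbundled) action `act`. -/
def IsOneCocycle {G : Type*} [Group G] {A : Type*} [AddCommGroup A]
    (act : G → A → A) (f : G → A) : Prop :=
  ∀ g h : G, f (g * h) = act g (f h) + f g

/-- `f : G → A` is a 1-coboundary for the (unbundled) action `act`. -/
def IsOneCoboundary {G : Type*} [Group G] {A : Type*} [AddCommGroup A]
    (act : G → A → A) (f : G → A) : Prop :=
  ∃ a : A, ∀ g : G, f g = act g a - a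

/-- `f : G → G → A` is a 2-coboundary for the (unbundled) action `act`. -/
def IsTwoCoboundary {G : Type*} [Group G] {A : Type*} [AddCommGroup A]
    (act : G → A → A) (f : G → G → A) : Prop :=
  ∃ c : G → A, ∀ g h : G, f g h = act g (c h) - c (g * h) + c g

/-- restriction of an (unbundled) action to a subgroup. -/
def resAct {G : Type*} [Group G] {A : Type*} (H : Subgroup G) (act : G → A → A) :
    H → A → A := fun h => act (h : G)

/-! ## Augmentation ideal for a general group -/

/-- the augmentation map `Z[G] → Z`. -/
def augGen (G : Type*) [Group G] : MonoidAlgebra ℤ G →+* ℤ :=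
  (MonoidAlgebra.lift ℤ ℤ G 1).toRingHom

/-- the augmentation ideal `I[G] ⊆ Z[G]`. -/
def IGen (G : Type*) [Group G] : Ideal (MonoidAlgebra ℤ G) := RingHom.ker (augGen G)

/-- the action of `G` on `I[G]` by left multiplication. -/
def actIGen (G : Type*) [Group G] (g : G) (y : ↥(IGen G)) : ↥(IGen G) :=
  ⟨of ℤ G g * y.val, by
    have h0 : augGen G y.val = 0 := y.2
    simp [IGen, RingHom.mem_ker, map_mul, h0]⟩

/-- the distinguished 1-cocycle `d_H : H → I[G]`, `h ↦ h - 1`. -/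
def dGen {G : Type*} [Group G] (H : Subgroup G) (h : H) : ↥(IGen G) :=
  ⟨of ℤ G (h : G) - 1, by simp [IGen, RingHom.mem_ker, map_sub, augGen]⟩

/-! ## The groups of the paper -/

/-- the elementary abelian group `G₁₂` of order `p²`. -/
abbrev G12t (p : ℕ) := Multiplicative (ZMod p × ZMod p)
/-- a cyclic group of order `p`. -/
abbrev Cpt (p : ℕ) := Multiplicative (ZMod p)
/-- the elementary abelian group `G = ⟨σ₁⟩ × ⟨σ₂⟩ × ⟨σ₃⟩ × ⟨σ₄⟩` of order `p⁴`. -/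
abbrev Gp (p : ℕ) := Multiplicative (ZMod p × ZMod p × ZMod p × ZMod p)

def t1 (p : ℕ) : G12t p := Multiplicative.ofAdd (1, 0)
def t2 (p : ℕ) : G12t p := Multiplicative.ofAdd (0, 1)
def c1g (p : ℕ) : Cpt p := Multiplicative.ofAdd 1
def s1 (p : ℕ) : Gp p := Multiplicative.ofAdd (1, 0, 0, 0)
def s2 (p : ℕ) : Gp p := Multiplicative.ofAdd (0, 1, 0, 0)
def s3 (p : ℕ) : Gp p := Multiplicative.ofAdd (0, 0, 1, 0)
def s4 (p : ℕ) : Gp p := Multiplicative.ofAdd (0, 0, 0, 1)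

/-- the group ring `Z[G₁₂]`. -/
abbrev R12 (p : ℕ) := MonoidAlgebra ℤ (G12t p)
/-- the group ring `Z[⟨σ⟩]` of a cyclic group of order `p`. -/
abbrev RCp (p : ℕ) := MonoidAlgebra ℤ (Cpt p)
/-- the group ring `Z[G]`. -/
abbrev RG (p : ℕ) := MonoidAlgebra ℤ (Gp p)

/-- the quotient map `G → G₁₂ = G/G₃₄`. -/
def π12 (p : ℕ) : Gp p →* G12t p :=
  AddMonoidHom.toMultiplicative
    { toFun := fun v => (v.1, v.2.1), map_zero' := rfl, map_add' := fun _ _ => rfl }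

/-- the quotient map `G → ⟨σ₃⟩ = G/⟨σ₁,σ₂,σ₄⟩`. -/
def π3 (p : ℕ) : Gp p →* Cpt p :=
  AddMonoidHom.toMultiplicative
    { toFun := fun v => v.2.2.1, map_zero' := rfl, map_add' := fun _ _ => rfl }

/-- the quotient map `G → ⟨σ₄⟩ = G/⟨σ₁,σ₂,σ₃⟩`. -/
def π4 (p : ℕ) : Gp p →* Cpt p :=
  AddMonoidHom.toMultiplicative
    { toFun := fun v => v.2.2.2, map_zero' := rfl, map_add' := fun _ _ => rfl }

/-- the inclusion `G₁₂ → G`. -/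
def emb12 (p : ℕ) : G12t p →* Gp p :=
  AddMonoidHom.toMultiplicative
    { toFun := fun v => (v.1, v.2, 0, 0), map_zero' := rfl,
      map_add' := fun _ _ => by ext <;> simp }

/-- the subgroup `G₁₂ = ⟨σ₁, σ₂⟩ ≤ G`. -/
def G12sub (p : ℕ) : Subgroup (Gp p) := Subgroup.closure {s1 p, s2 p}
/-- the subgroup `G₃₄ = ⟨σ₃, σ₄⟩ ≤ G`. -/
def G34sub (p : ℕ) : Subgroup (Gp p) := Subgroup.closure {s3 p, s4 p}

/-! ## The lattice `A₂(G₁₂)` and its distinguished elements -/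

/-- the map `Z[G₁₂]·d₁ ⊕ Z[G₁₂]·d₂ → I[G₁₂] ⊆ Z[G₁₂]`, `dᵢ ↦ σᵢ - 1`. -/
def d12map (p : ℕ) : (R12 p × R12 p) →ₗ[R12 p] R12 p :=
  (LinearMap.toSpanSingleton (R12 p) (R12 p) (of ℤ (G12t p) (t1 p) - 1)).comp
      (LinearMap.fst (R12 p) (R12 p) (R12 p)) +
  (LinearMap.toSpanSingleton (R12 p) (R12 p) (of ℤ (G12t p) (t2 p) - 1)).comp
      (LinearMap.snd (R12 p) (R12 p) (R12 p))

/-- the lattice `A₂(G₁₂)`, the kernel of `Z[G₁₂]·d₁ ⊕ Z[G₁₂]·d₂ → I[G₁₂]`. -/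
def A2G12 (p : ℕ) : Submodule (R12 p) (R12 p × R12 p) := LinearMap.ker (d12map p)

/-- `u₁₂ = (σ₂-1)d₁ - (σ₁-1)d₂` as an element of `Z[G₁₂]·d₁ ⊕ Z[G₁₂]·d₂`. -/
def u12raw (p : ℕ) : R12 p × R12 p :=
  (of ℤ (G12t p) (t2 p) - 1, -(of ℤ (G12t p) (t1 p) - 1))

/-- the norm element `N = 1 + g + ⋯ + g^(p-1)` of a group ring. -/
def NN (p : ℕ) {G : Type*} [CommGroup G] (g : G) : MonoidAlgebra ℤ G :=
  ∑ k ∈ Finset.range p, of ℤ G g ^ k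

/-- `b₁ = N₁·d₁`. -/
def b1raw (p : ℕ) : R12 p × R12 p := (NN p (t1 p), 0)
/-- `b₂ = N₂·d₂`. -/
def b2raw (p : ℕ) : R12 p × R12 p := (0, NN p (t2 p))

lemma ofAdd_pow_p (p : ℕ) {A : Type*} [AddCommGroup A] (a : A) (h : p • a = 0) :
    (Multiplicative.ofAdd a) ^ p = 1 := by
  rw [← ofAdd_nsmul, h]; rfl

lemma zmod_p_smul (p : ℕ) (x : ZMod p) : p • x = 0 := by
  rw [nsmul_eq_mul, ZMod.natCast_self, zero_mul]

lemma t1_pow_p (p : ℕ) : (t1 p) ^ p = 1 := by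
  refine ofAdd_pow_p p _ ?_
  rw [Prod.smul_mk, zmod_p_smul, zmod_p_smul]; rfl

lemma t2_pow_p (p : ℕ) : (t2 p) ^ p = 1 := by
  refine ofAdd_pow_p p _ ?_
  rw [Prod.smul_mk, zmod_p_smul, zmod_p_smul]; rfl

lemma c1g_pow_p (p : ℕ) : (c1g p) ^ p = 1 := by
  refine ofAdd_pow_p p _ (zmod_p_smul p _)

lemma NN_mul (p : ℕ) {G : Type*} [CommGroup G] (g : G) (h : g ^ p = 1) :
    NN p g * (of ℤ G g - 1) = 0 := by
  rw [NN, geom_sum_mul, ← map_pow, h, map_one, sub_self]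

lemma u12raw_mem (p : ℕ) : u12raw p ∈ A2G12 p := by
  simp only [A2G12, LinearMap.mem_ker, d12map, LinearMap.add_apply, LinearMap.comp_apply,
    LinearMap.fst_apply, LinearMap.snd_apply, LinearMap.toSpanSingleton_apply, u12raw,
    smul_eq_mul]
  ring

lemma b1raw_mem (p : ℕ) : b1raw p ∈ A2G12 p := by
  simp only [A2G12, LinearMap.mem_ker, d12map, LinearMap.add_apply, LinearMap.comp_apply,
    LinearMap.fst_apply, LinearMap.snd_apply, LinearMap.toSpanSingleton_apply, b1raw,
    smul_eq_mul, zero_mul, add_zero]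
  exact NN_mul p _ (t1_pow_p p)

lemma b2raw_mem (p : ℕ) : b2raw p ∈ A2G12 p := by
  simp only [A2G12, LinearMap.mem_ker, d12map, LinearMap.add_apply, LinearMap.comp_apply,
    LinearMap.fst_apply, LinearMap.snd_apply, LinearMap.toSpanSingleton_apply, b2raw,
    smul_eq_mul, zero_mul, zero_add]
  exact NN_mul p _ (t2_pow_p p)

/-- `u₁₂` as an element of `A₂(G₁₂)`. -/
def u12e (p : ℕ) : ↥(A2G12 p) := ⟨u12raw p, u12raw_mem p⟩
/-- `b₁` as an element of `A₂(G₁₂)`. -/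
def b1e (p : ℕ) : ↥(A2G12 p) := ⟨b1raw p, b1raw_mem p⟩
/-- `b₂` as an element of `A₂(G₁₂)`. -/
def b2e (p : ℕ) : ↥(A2G12 p) := ⟨b2raw p, b2raw_mem p⟩

/-- the action of `G₁₂` on `A₂(G₁₂)`. -/
def actA2 (p : ℕ) (x : G12t p) (v : ↥(A2G12 p)) : ↥(A2G12 p) :=
  of ℤ (G12t p) x • v

/-! ## The cyclic lattice `A₂(⟨σ⟩)` -/

/-- the map `Z[⟨σ⟩]·d → I[⟨σ⟩]`, `d ↦ σ - 1`. -/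
def dcmap (p : ℕ) : RCp p →ₗ[RCp p] RCp p :=
  LinearMap.toSpanSingleton (RCp p) (RCp p) (of ℤ (Cpt p) (c1g p) - 1)

/-- the lattice `A₂(⟨σ⟩)` for a cyclic group of order `p`. -/
def A2C (p : ℕ) : Submodule (RCp p) (RCp p) := LinearMap.ker (dcmap p)

/-- the norm element `N = 1 + σ + ⋯ + σ^(p-1)` as an element of `A₂(⟨σ⟩)`. -/
def NCe (p : ℕ) : ↥(A2C p) :=
  ⟨NN p (c1g p), by
    simp only [A2C, LinearMap.mem_ker, dcmap, LinearMap.toSpanSingleton_apply, smul_eq_mul]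
    exact NN_mul p _ (c1g_pow_p p)⟩

/-- the action of `G` on `A₂(⟨σⱼ⟩)` through a projection `π : G → ⟨σⱼ⟩`. -/
def actCvia (p : ℕ) (π : Gp p →* Cpt p) (g : Gp p) (v : ↥(A2C p)) : ↥(A2C p) :=
  of ℤ (Cpt p) (π g) • v

/-! ## The explicit canonical 2-cocycles -/

/-- the elements `u_{m,n} ∈ A₂(G₁₂)` (equation (13) of the paper). -/
def umn (p : ℕ) (m1 m2 n1 n2 : ℕ) : ↥(A2G12 p) :=
  (-(of ℤ (G12t p) (t1 p ^ m1) * ∑ j ∈ Finset.range n1, ∑ i ∈ Finset.range m2,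
      of ℤ (G12t p) (t1 p ^ i * t2 p ^ j))) • u12e p +
  (of ℤ (G12t p) (t1 p ^ n1) * ∑ j ∈ Finset.range n2, ∑ i ∈ Finset.range m1,
      of ℤ (G12t p) (t1 p ^ i * t2 p ^ j)) • u12e p

/-- the explicit 2-cocycle `c₁₂` representing the canonical class `[c_{G₁₂}]`. -/
def c12coc (p : ℕ) (x y : G12t p) : ↥(A2G12 p) :=
  let m1 := (Multiplicative.toAdd x).1.val
  let m2 := (Multiplicative.toAdd x).2.val
  let n1 := (Multiplicative.toAdd y).1.val
  let n2 := (Multiplicative.toAdd y).2.val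
  of ℤ (G12t p) (t1 p ^ m1) • umn p 0 m2 n1 0 +
    ((m1 + n1) / p) • b1e p +
    ((m2 + n2) / p) • (of ℤ (G12t p) (t1 p ^ ((m1 + n1) % p)) • b2e p)

/-- the explicit 2-cocycle representing the canonical class of a cyclic group of
order `p` with coefficients in `A₂(⟨σ⟩)`. -/
def ccyc (p : ℕ) (x y : Cpt p) : ↥(A2C p) :=
  if p ≤ (Multiplicative.toAdd x).val + (Multiplicative.toAdd y).val then NCe p else 0

/-! ## The lattice `Q = A₂(G₁₂) ⊕ K₃ ⊕ K₄` -/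

/-- `K_j = A₂(⟨σⱼ⟩) ⊕ Z[⟨σⱼ⟩]`. -/
abbrev Kc (p : ℕ) := ↥(A2C p) × RCp p

/-- the carrier of the `G`-lattice `Q = A₂(G₁₂) ⊕ K₃ ⊕ K₄`. -/
abbrev Qc (p : ℕ) := ↥(A2G12 p) × Kc p × Kc p

/-- the action of `G` on `Q`: `G₁₂` acts naturally on `A₂(G₁₂)` and trivially on
`K₃`, `K₄`; `⟨σⱼ⟩` acts naturally on `K_j` and trivially elsewhere. -/
def actQ (p : ℕ) (g : Gp p) (q : Qc p) : Qc p :=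
  (of ℤ (G12t p) (π12 p g) • q.1,
   (of ℤ (Cpt p) (π3 p g) • q.2.1.1, of ℤ (Cpt p) (π3 p g) * q.2.1.2),
   (of ℤ (Cpt p) (π4 p g) • q.2.2.1, of ℤ (Cpt p) (π4 p g) * q.2.2.2))

/-- the 2-cocycle `ω = inf(c₁₂) - inf(c₃) - inf(c₄)` with values in `Q`. -/
def ωc (p : ℕ) (g g' : Gp p) : Qc p :=
  (c12coc p (π12 p g) (π12 p g'),
   (-(ccyc p (π3 p g) (π3 p g')), 0),
   (-(ccyc p (π4 p g) (π4 p g')), 0))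

/-- the order of the restriction of `[ω]` to a subgroup `H ≤ G` in `H²(H, Q)`. -/
def nOrd (p : ℕ) (H : Subgroup (Gp p)) : ℕ :=
  sInf {n : ℕ | 0 < n ∧
    IsTwoCoboundary (resAct H (actQ p)) fun h h' => n • ωc p (h : Gp p) (h' : Gp p)}

/-! ## The augmentation ideal `I[G]` and the lattice `M_ω` -/

/-- the augmentation map `Z[G] → Z`. -/
def aug (p : ℕ) : RG p →+* ℤ := (MonoidAlgebra.lift ℤ ℤ (Gp p) 1).toRingHom

/-- the augmentation ideal `I[G]`. -/
def IG (p : ℕ) : Ideal (RG p) := RingHom.ker (aug p)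

/-- the action of `G` on `I[G]` by left multiplication. -/
def actIG (p : ℕ) (g : Gp p) (y : ↥(IG p)) : ↥(IG p) :=
  ⟨of ℤ (Gp p) g * y.val, by
    have h0 : aug p y.val = 0 := y.2
    simp [IG, RingHom.mem_ker, map_mul, h0]⟩

/-- the 1-cocycle `d_H : H → I[G]`, `h ↦ h - 1`. -/
def dH (p : ℕ) (H : Subgroup (Gp p)) (h : H) : ↥(IG p) :=
  ⟨of ℤ (Gp p) (h : Gp p) - 1, by simp [IG, RingHom.mem_ker, map_sub, aug]⟩

/-- the carrier of the `G`-lattice `M_ω = Q ⊕ I[G]`. -/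
abbrev Mc (p : ℕ) := Qc p × ↥(IG p)

/-- the `Q`-valued correction term of the twisted action on `M_ω`:
`θ(g, Σ a_{g'} g') = Σ a_{g'} ω(g, g')`; on `y ∈ I[G]` (so `Σ a_{g'} = 0` and
`y = Σ a_{g'} (g' - 1)`) this is the `Q`-component of `g·(0, y)`. -/
def θω (p : ℕ) (g : Gp p) (y : RG p) : Qc p :=
  Finsupp.sum y.coeff fun g' a => a • ωc p g g'

/-- the twisted action of `G` on `M_ω = Q ⊕ I[G]`: `g(x,0) = (gx, 0)` and
`g(0, g'-1) = (ω(g,g'), g(g'-1))`, extended `Z`-linearly. -/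
def actM (p : ℕ) (g : Gp p) (m : Mc p) : Mc p :=
  (actQ p g m.1 + θω p g m.2.val, actIG p g m.2)

/-! ## The map `π : A₂(G₁₂) → Z/pZ` -/

/-- the `G₁₂`-module homomorphism `π : A₂(G₁₂) → Z/pZ`, determined by
`π(x·u₁₂ + y·b₁ + z·b₂) = ε(x) mod p`; concretely it sends `v = (v₁, v₂)` to
`Σ_g v₁(g)·(exponent of σ₂ in g)`. -/
def πmap (p : ℕ) (v : ↥(A2G12 p)) : ZMod p :=
  Finsupp.sum (v : R12 p × R12 p).1.coeff fun g a => (a : ZMod p) * (Multiplicative.toAdd g).2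

/-! ## The set `𝓗` of subgroups, the cochains `v_H`, and the lattice `M` -/

/-- the set of subgroups `𝓗 = {G} ∪ {⟨τ, σ₃, σ₄⟩ : τ ∈ G₁₂}`. -/
def HH (p : ℕ) : Set (Subgroup (Gp p)) :=
  insert ⊤ {H | ∃ τ ∈ G12sub p, H = Subgroup.closure {τ, s3 p, s4 p}}

/-- the 1-cochain `v_H : H₁₂ → A₂(G₁₂)`, `v_H(h̄₁) = Σ_{h̄ ∈ H₁₂} c₁₂(h̄₁, h̄)`,
here inflated to a function of `h̄₁ ∈ G₁₂`. -/
def vH (p : ℕ) (H : Subgroup (Gp p)) (x : G12t p) : ↥(A2G12 p) :=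
  ∑ᶠ h' : ↥(H.map (π12 p)), c12coc p x (h' : G12t p)

/-- the 1-cochain `f_H : H → M_ω`, `f_H(h) = (z_H(h) - v_H(h̄), n_H·(h-1))`,
built from a choice of 1-cochain `z_H : H → K₃ ⊕ K₄`. -/
def fHof (p : ℕ) (H : Subgroup (Gp p)) (zH : H → Kc p × Kc p) (h : H) : Mc p :=
  ((-(vH p H (π12 p (h : Gp p))), (zH h).1, (zH h).2),
   (nOrd p H) • dH p H h)

/-- the carrier of the permutation lattice `P = ⊕_{H ∈ 𝓗} Z[G/H]`. -/
abbrev Pc (p : ℕ) := ∀ H : ↥(HH p), ((Gp p ⧸ (H : Subgroup (Gp p))) →₀ ℤ)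

/-- the carrier of the `G`-lattice `M = M_ω ⊕ P`. -/
abbrev MC (p : ℕ) := Mc p × Pc p

/-- the action of `G` on `M = M_ω ⊕ P`, twisted by a family of 1-cocycles
`f_H : H → M_ω` (`H ∈ 𝓗`): `g(x, 0) = (gx, 0)` and
`g(0, u_{gᵢH}) = (gⱼ·f_H(h), u_{gⱼH})` where `g·gᵢ = gⱼ·h`, `h ∈ H`, and the coset
representatives are chosen by `Quotient.out`. -/
def actMFull (p : ℕ) (fH : ∀ H : ↥(HH p), (↥(H.val) → Mc p))
    (g : Gp p) (m : MC p) : MC p :=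
  (actM p g m.1 +
     ∑ᶠ H : ↥(HH p), Finsupp.sum (m.2 H) fun c a =>
       a • actM p (Quotient.out (g • c))
         (fH H ⟨(Quotient.out (g • c))⁻¹ * (g * Quotient.out c), by
            rw [← QuotientGroup.eq, QuotientGroup.out_eq', ← smul_eq_mul,
              MulAction.Quotient.mk_smul_out]⟩),
   fun H => Finsupp.mapDomain (fun c => g • c) (m.2 H))

/-- the map `π' : M → Z/pZ`, `(x₀, x₁, x₂, y, z) ↦ π(x₀)`. -/
def πmap' (p : ℕ) (m : MC p) : ZMod p := πmap p m.1.1.1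

/-- the norm element `N₃₄ = Σ_{g ∈ G₃₄} g ∈ Z[G]`. -/
def N34 (p : ℕ) : RG p := ∑ᶠ g : ↥(G34sub p), of ℤ (Gp p) (g : Gp p)

/-- the augmentation map `Z[G₁₂] → Z`. -/
def aug12 (p : ℕ) : R12 p →+* ℤ := (MonoidAlgebra.lift ℤ ℤ (G12t p) 1).toRingHom

/-! Write `s = σ₁`, `t = σ₂`. Collapsing the `s`-direction, i.e. applying the ring endomorphism
of `Z[G₁₂]` induced by `s ↦ 1, t ↦ t`, changes an element only by a multiple of `s - 1` and
sends `N₁` to `p`; as `Z[G₁₂]` is torsion free, `y N₁ = 0` therefore forces `y ∈ (s - 1)`.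
Dually, `s`-invariant elements are multiples of `N₁`.

A relation `x u₁₂ + y b₁ + z b₂ = 0` says `x (t - 1) = -y N₁` and `x (s - 1) = z N₂`.
Collapsing `s` in the second equation gives `z = (s - 1) z' + (t - 1) z''`; then
`(x - z' N₂)(s - 1) = 0`, so `x = z' N₂ + y' N₁`, and finally `(y + (t - 1) y') N₁ = 0`
produces `y''`. -/

lemma mapDomainRingHom_of {R M N : Type*} [Semiring R] [Monoid M] [Monoid N] (f : M →* N)
    (m : M) : mapDomainRingHom R f (of R M m) = of R N (f m) := by
  simp [mapDomain_single]

lemma mapDomainRingHom_NN {G H : Type*} [CommGroup G] [CommGroup H] (p : ℕ) (f : G →* H)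
    (g : G) : mapDomainRingHom ℤ f (NN p g) = NN p (f g) := by
  simp only [NN, map_sum, map_pow, mapDomainRingHom_of]

lemma NN_one {G : Type*} [CommGroup G] (p : ℕ) : NN p (1 : G) = p := by
  simp only [NN, map_one, one_pow, Finset.sum_const, Finset.card_range, nsmul_one]

structure ProjectsAwayFrom {G : Type*} [CommGroup G] (g : G) (φ : G →* G) : Prop where
  map_self : φ g = 1
  exists_eq_pow_mul : ∀ h, ∃ k : ℕ, h = g ^ k * φ h

namespace ProjectsAwayFrom

variable {G : Type*} [CommGroup G] {g : G} {φ : G →* G}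

lemma sub_one_dvd_sub_mapDomain (hφ : ProjectsAwayFrom g φ) (y : MonoidAlgebra ℤ G) :
    of ℤ G g - 1 ∣ y - mapDomainRingHom ℤ φ y := by
  induction y using MonoidAlgebra.induction_on with
  | of h =>
    obtain ⟨k, hk⟩ := hφ.exists_eq_pow_mul h
    have hof : of ℤ G h = of ℤ G g ^ k * of ℤ G (φ h) := by
      rw [← map_pow, ← map_mul, ← hk]
    rw [mapDomainRingHom_of, hof, ← sub_one_mul]
    exact dvd_mul_of_dvd_left (sub_one_dvd_pow_sub_one _ k) _
  | add y z hy hz =>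
    rw [map_add, add_sub_add_comm]
    exact dvd_add hy hz
  | smul r y hy =>
    rw [map_zsmul, ← smul_sub, zsmul_eq_mul]
    exact dvd_mul_of_dvd_right hy _

lemma sub_one_dvd_of_mul_NN_eq_zero (hφ : ProjectsAwayFrom g φ) {p : ℕ} (hp : p ≠ 0)
    {y : MonoidAlgebra ℤ G} (h : y * NN p g = 0) : of ℤ G g - 1 ∣ y := by
  have hmap := congrArg (mapDomainRingHom ℤ φ) h
  rw [map_mul, mapDomainRingHom_NN, hφ.map_self, NN_one, map_zero, mul_comm,
    ← nsmul_eq_mul, smul_eq_zero] at hmap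
  simpa [hmap.resolve_left hp] using hφ.sub_one_dvd_sub_mapDomain y

lemma coeff_eq_coeff_map_of_mul_of_eq (hφ : ProjectsAwayFrom g φ) {y : MonoidAlgebra ℤ G}
    (h : y * of ℤ G g = y) (u : G) : y.coeff u = y.coeff (φ u) := by
  have hpow (k : ℕ) : y * of ℤ G (g ^ k) = y := by
    induction k with
    | zero => rw [pow_zero, map_one, mul_one]
    | succ k ih => rw [pow_succ, map_mul, ← mul_assoc, ih, h]
  obtain ⟨k, hk⟩ := hφ.exists_eq_pow_mul u
  conv_lhs => rw [← hpow k]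
  rw [of_apply, coeff_mul_single_apply, mul_one,
    mul_inv_eq_of_eq_mul (hk.trans (mul_comm _ _))]

lemma NN_dvd_of_mul_sub_one_eq_zero (hφ : ProjectsAwayFrom g φ) {p : ℕ} (hp : p ≠ 0)
    (hg : orderOf g = p) {y : MonoidAlgebra ℤ G} (h : y * (of ℤ G g - 1) = 0) :
    NN p g ∣ y := by
  classical
  have hinv : y * of ℤ G g = y := by rwa [mul_sub_one, sub_eq_zero] at h
  -- The range of `φ` meets every coset of `⟨g⟩` exactly once, so `y` is `N` times its
  -- restriction to that range.
  refine ⟨ofCoeff (y.coeff.filter fun u ↦ φ u = u), ?_⟩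
  ext u
  obtain ⟨k₀, hk₀⟩ := hφ.exists_eq_pow_mul u
  have hterm (k : ℕ) : (of ℤ G g ^ k * ofCoeff (y.coeff.filter fun u ↦ φ u = u)).coeff u =
      if φ u = (g ^ k)⁻¹ * u then y.coeff u else 0 := by
    rw [← map_pow, of_apply, coeff_single_mul_apply, one_mul, coeff_ofCoeff, Finsupp.filter_apply,
      map_mul, map_inv, map_pow, hφ.map_self, one_pow, inv_one, one_mul]
    split_ifs with hc
    · rw [← hc, ← hφ.coeff_eq_coeff_map_of_mul_of_eq hinv]
    · rfl
  have hfilter : (Finset.range p).filter (fun k ↦ φ u = (g ^ k)⁻¹ * u) = {k₀ % p} := by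
    ext k
    rw [Finset.mem_filter, Finset.mem_range, Finset.mem_singleton, eq_inv_mul_iff_mul_eq]
    nth_rw 2 [hk₀]
    rw [mul_left_inj, pow_eq_pow_iff_modEq, hg, Nat.ModEq]
    constructor
    · rintro ⟨hk, hmod⟩
      rw [← hmod, Nat.mod_eq_of_lt hk]
    · rintro rfl
      exact ⟨Nat.mod_lt _ (Nat.pos_of_ne_zero hp), Nat.mod_mod _ _⟩
  simp only [NN, Finset.sum_mul, coeff_sum, Finset.sum_apply', hterm]
  rw [Finset.sum_ite, Finset.sum_const_zero, add_zero, hfilter, Finset.sum_singleton]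

end ProjectsAwayFrom

section TwoGenerators

variable {G : Type*} [CommGroup G] {g₁ g₂ : G} {φ₁ φ₂ : G →* G} {p : ℕ}

lemma exists_eq_sub_one_mul_add_sub_one_mul (hφ₁ : ProjectsAwayFrom g₁ φ₁)
    (hφ₂ : ProjectsAwayFrom g₂ φ₂) (hφ₁g₂ : φ₁ g₂ = g₂) (hp : p ≠ 0) {x z : MonoidAlgebra ℤ G}
    (h : x * (of ℤ G g₁ - 1) = z * NN p g₂) :
    ∃ z' z'', z = (of ℤ G g₁ - 1) * z' + (of ℤ G g₂ - 1) * z'' := by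
  have hmap := congrArg (mapDomainRingHom ℤ φ₁) h
  rw [map_mul, map_mul, map_sub, mapDomainRingHom_of, hφ₁.map_self, map_one, map_one, sub_self,
    mul_zero, mapDomainRingHom_NN, hφ₁g₂] at hmap
  obtain ⟨z'', hz''⟩ := hφ₂.sub_one_dvd_of_mul_NN_eq_zero hp hmap.symm
  obtain ⟨z', hz'⟩ := hφ₁.sub_one_dvd_sub_mapDomain z
  exact ⟨z', z'', by rw [← hz'', ← hz', sub_add_cancel]⟩

theorem exists_decomposition_of_syzygy (hφ₁ : ProjectsAwayFrom g₁ φ₁)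
    (hφ₂ : ProjectsAwayFrom g₂ φ₂) (hφ₁g₂ : φ₁ g₂ = g₂) (hp : p ≠ 0) (hg₁ : orderOf g₁ = p)
    (hg₂ : g₂ ^ p = 1) {x y z : MonoidAlgebra ℤ G}
    (h₁ : x * (of ℤ G g₂ - 1) + y * NN p g₁ = 0)
    (h₂ : x * -(of ℤ G g₁ - 1) + z * NN p g₂ = 0) :
    ∃ y' y'' z' z'' : MonoidAlgebra ℤ G,
      x = z' * NN p g₂ + y' * NN p g₁ ∧
      y = -((of ℤ G g₂ - 1) * y') + (of ℤ G g₁ - 1) * y'' ∧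
      z = (of ℤ G g₁ - 1) * z' + (of ℤ G g₂ - 1) * z'' := by
  have hN₂ := NN_mul p g₂ hg₂
  have hxz : x * (of ℤ G g₁ - 1) = z * NN p g₂ := by linear_combination -h₂
  obtain ⟨z', z'', hz⟩ := exists_eq_sub_one_mul_add_sub_one_mul hφ₁ hφ₂ hφ₁g₂ hp hxz
  have hx : (x - z' * NN p g₂) * (of ℤ G g₁ - 1) = 0 := by
    linear_combination hxz + NN p g₂ * hz + z'' * hN₂
  obtain ⟨y', hy'⟩ := hφ₁.NN_dvd_of_mul_sub_one_eq_zero hp hg₁ hx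
  have hy : (y + (of ℤ G g₂ - 1) * y') * NN p g₁ = 0 := by
    linear_combination h₁ - (of ℤ G g₂ - 1) * hy' - z' * hN₂
  obtain ⟨y'', hy''⟩ := hφ₁.sub_one_dvd_of_mul_NN_eq_zero hp hy
  exact ⟨y', y'', z', z'', by linear_combination hy', by linear_combination hy'', hz⟩

end TwoGenerators

def projFst (p : ℕ) : G12t p →* G12t p :=
  AddMonoidHom.toMultiplicative ((AddMonoidHom.inl _ _).comp (AddMonoidHom.fst _ _))

def projSnd (p : ℕ) : G12t p →* G12t p :=
  AddMonoidHom.toMultiplicative ((AddMonoidHom.inr _ _).comp (AddMonoidHom.snd _ _))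

lemma projectsAwayFrom_t1 (p : ℕ) [NeZero p] : ProjectsAwayFrom (t1 p) (projSnd p) where
  map_self := rfl
  exists_eq_pow_mul h := ⟨(Multiplicative.toAdd h).1.val, by
    apply Multiplicative.toAdd.injective
    ext <;> simp [t1, projSnd]⟩

lemma projectsAwayFrom_t2 (p : ℕ) [NeZero p] : ProjectsAwayFrom (t2 p) (projFst p) where
  map_self := rfl
  exists_eq_pow_mul h := ⟨(Multiplicative.toAdd h).2.val, by
    apply Multiplicative.toAdd.injective
    ext <;> simp [t2, projFst]⟩

lemma orderOf_t1 {p : ℕ} (hp : p.Prime) : orderOf (t1 p) = p := by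
  have := Fact.mk hp
  refine orderOf_eq_prime (t1_pow_p p) fun h ↦ ?_
  simpa [t1] using congrArg (fun x ↦ (Multiplicative.toAdd x).1) h
theorem statement1 (p : ℕ) (hp : p.Prime) :
    (∀ x y z : R12 p,
      x • u12raw p + y • b1raw p + z • b2raw p = 0 →
        ∃ y' y'' z' z'' : R12 p,
          x = z' * NN p (t2 p) + y' * NN p (t1 p) ∧
          y = -((of ℤ (G12t p) (t2 p) - 1) * y') + (of ℤ (G12t p) (t1 p) - 1) * y'' ∧
          z = (of ℤ (G12t p) (t1 p) - 1) * z' + (of ℤ (G12t p) (t2 p) - 1) * z'') ∧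
    (of ℤ (G12t p) (t1 p) - 1) • b1raw p = 0 ∧
    (of ℤ (G12t p) (t2 p) - 1) • b2raw p = 0 ∧
    (of ℤ (G12t p) (t2 p) - 1) • b1raw p = NN p (t1 p) • u12raw p ∧
    (-(of ℤ (G12t p) (t1 p) - 1)) • b2raw p = NN p (t2 p) • u12raw p := by
  have : NeZero p := ⟨hp.ne_zero⟩
  have hN₁ := NN_mul p _ (t1_pow_p p)
  have hN₂ := NN_mul p _ (t2_pow_p p)
  refine ⟨fun x y z h ↦ ?_, ?_, ?_, ?_, ?_⟩
  · have h₁ : x * (of ℤ _ (t2 p) - 1) + y * NN p (t1 p) = 0 := by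
      simpa [u12raw, b1raw, b2raw] using congrArg Prod.fst h
    have h₂ : x * -(of ℤ _ (t1 p) - 1) + z * NN p (t2 p) = 0 := by
      simpa [u12raw, b1raw, b2raw] using congrArg Prod.snd h
    exact exists_decomposition_of_syzygy (projectsAwayFrom_t1 p) (projectsAwayFrom_t2 p) rfl
      hp.ne_zero (orderOf_t1 hp) (t2_pow_p p) h₁ h₂
  all_goals simp only [u12raw, b1raw, b2raw, Prod.smul_mk, smul_eq_mul, Prod.mk_eq_zero,
    Prod.mk.injEq]
  · exact ⟨by linear_combination hN₁, mul_zero _⟩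
  · exact ⟨mul_zero _, by linear_combination hN₂⟩
  · exact ⟨mul_comm _ _, by linear_combination hN₁⟩
  · exact ⟨by linear_combination -hN₂, mul_comm _ _⟩
end
end

section
/- For all m = (m1, m2), n = (n1, n2) ∈ N^2, π(u_{m,n}) ≡ m1·n2 − m2·n1 (mod p), where u_{m,n} = −σ1^{m1}·(Σ_{j=0}^{n1−1} Σ_{i=0}^{m2−1} σ1^i σ2^j)·u12 + σ1^{n1}·(Σ_{j=0}^{n2−1} Σ_{i=0}^{m1−1} σ1^i σ2^j)·u12 ∈ A_2(G12). -/
open MonoidAlgebra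

set_option maxHeartbeats 1000000
set_option synthInstance.maxHeartbeats 400000

noncomputable section

/-! `π(v)` weights the coefficients of the first coordinate `v₁` by the exponent of `σ₂`. That
weighting `D` is `derivOfHom χ` for the homomorphism `χ : G₁₂ → ℤ/p` reading off the exponent, and
it satisfies the Leibniz rule along the augmentation `ε`, so `D(x(σ₂ - 1)) = ε(x)`. Since
`v₁ = x(σ₂ - 1)` for `v = x·u₁₂`, we get `π(x·u₁₂) = ε(x)`, and the augmentations of the two
double sums in `u_{m,n}` are `n₁m₂` and `n₂m₁`. -/

def derivOfHom {G A : Type*} [Monoid G] [AddCommGroup A] (χ : G →* Multiplicative A) :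
    MonoidAlgebra ℤ G →+ A :=
  (Finsupp.liftAddHom fun g => zmultiplesHom A (χ g).toAdd).comp
    coeffAddEquiv.toAddMonoidHom

section derivOfHom

variable {G A : Type*} [AddCommGroup A]

@[simp]
lemma derivOfHom_single [Monoid G] (χ : G →* Multiplicative A) (g : G) (n : ℤ) :
    derivOfHom χ (single g n) = n • (χ g).toAdd :=
  Finsupp.liftAddHom_apply_single _ _ _

@[simp]
lemma derivOfHom_one [Monoid G] (χ : G →* Multiplicative A) : derivOfHom χ 1 = 0 := by
  simp [one_def]

@[simp]
lemma augGen_single [Group G] (g : G) (n : ℤ) : augGen G (single g n) = n := by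
  simp [augGen]

lemma derivOfHom_mul [Group G] (χ : G →* Multiplicative A) (x y : MonoidAlgebra ℤ G) :
    derivOfHom χ (x * y) = augGen G x • derivOfHom χ y + augGen G y • derivOfHom χ x := by
  induction x using MonoidAlgebra.induction_linear with
  | zero => simp
  | add x x' hx hx' => simp only [add_mul, map_add, hx, hx', add_smul, smul_add]; abel
  | single g m =>
    induction y using MonoidAlgebra.induction_linear with
    | zero => simp
    | add y y' hy hy' => simp only [mul_add, map_add, hy, hy', add_smul, smul_add]; abel
    | single h n => simp [single_mul_single, mul_smul, smul_comm m n, add_comm]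

lemma derivOfHom_mul_of_sub_one [Group G] (χ : G →* Multiplicative A)
    (x : MonoidAlgebra ℤ G) (t : G) :
    derivOfHom χ (x * (of ℤ G t - 1)) = augGen G x • (χ t).toAdd := by
  simp [derivOfHom_mul, of_apply]

end derivOfHom

def sigma2Exponent (p : ℕ) : G12t p →* Multiplicative (ZMod p) :=
  AddMonoidHom.toMultiplicative (AddMonoidHom.snd _ _)

lemma πmap_eq_derivOfHom (p : ℕ) (v : ↥(A2G12 p)) :
    πmap p v = derivOfHom (sigma2Exponent p) (v : R12 p × R12 p).1 := by
  simp only [πmap, derivOfHom, AddMonoidHom.comp_apply, Finsupp.liftAddHom_apply]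
  congr 1
  funext g a
  simp [sigma2Exponent, zsmul_eq_mul]

theorem statement12_general (p : ℕ) (m1 m2 n1 n2 : ℕ) :
    πmap p (umn p m1 m2 n1 n2) = (m1 : ZMod p) * n2 - (m2 : ZMod p) * n1 := by
  rw [πmap_eq_derivOfHom]
  simp only [umn, u12e, u12raw, Submodule.coe_add, SetLike.val_smul, Prod.fst_add,
      Prod.smul_fst, smul_eq_mul, ← add_mul, derivOfHom_mul_of_sub_one]
  have hε : ∀ k l : ℕ, augGen (G12t p) (∑ j ∈ Finset.range k, ∑ i ∈ Finset.range l,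
      of ℤ (G12t p) (t1 p ^ i * t2 p ^ j)) = k * l := by
    intro k l
    simp [of_apply]
  have hσ₂ : (sigma2Exponent p (t2 p)).toAdd = 1 := rfl
  rw [map_add, map_neg, map_mul, map_mul, hε, hε, of_apply, of_apply, augGen_single,
    augGen_single, hσ₂, zsmul_one]
  push_cast
  ring

theorem statement12 (p : ℕ) (hp : p.Prime) (m1 m2 n1 n2 : ℕ) :
    πmap p (umn p m1 m2 n1 n2) = (m1 : ZMod p) * n2 - (m2 : ZMod p) * n1 :=
  statement12_general p m1 m2 n1 n2

end
end

section
/- Assume p ≠ 2. For every H ∈ 𝓗 and every h̄ ∈ H12, π(v_H(h̄)) = 0, where v_H(h̄1) = Σ_{h̄' ∈ H12} c12(h̄1, h̄'). -/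
open MonoidAlgebra

set_option maxHeartbeats 1000000
set_option synthInstance.maxHeartbeats 400000

noncomputable section

/-! On first coordinates, `π` is `D : Σ a_g g ↦ Σ a_g·(σ₂-exponent of g)`, which obeys the
Leibniz rule `D(rs) = ε(r)D(s) + D(r)ε(s)`. Hence `π(r·u₁₂) = ε(r)`, `π(b₁) = π(r·b₂) = 0`, and
`π(c₁₂(x, y)) = -n₁m₂` for `x = σ₁^{m₁}σ₂^{m₂}`, `y = σ₁^{n₁}σ₂^{n₂}`. Summing over `y ∈ H₁₂`
gives `-(Σ_{y ∈ H₁₂} n₁(y))·m₂`, which vanishes for odd `p` because `y ↦ y⁻¹` negates `n₁(y)`. -/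

theorem finsum_eq_zero_of_map_inv_eq_neg {G R : Type*} [Group G] [Finite G] [NonAssocRing R]
    [Nontrivial R] [NoZeroDivisors R] (hR : ringChar R ≠ 2) (f : G → R)
    (hf : ∀ g, f g⁻¹ = -f g) : ∑ᶠ g, f g = 0 := by
  have := Fintype.ofFinite G
  rw [finsum_eq_sum_of_fintype]
  refine (Ring.eq_self_iff_eq_zero_of_char_ne_two hR).mp ?_
  rw [← Finset.sum_neg_distrib]
  simp_rw [← hf]
  exact Equiv.sum_comp (Equiv.inv G) f

section WeightedAug

variable {G R : Type*} [CommRing R]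

/-- The additive map `Σ a_g g ↦ Σ a_g χ(g)` on `ℤ[G]`. -/
def weightedAug (χ : G → R) : MonoidAlgebra ℤ G →+ R :=
  (Finsupp.liftAddHom fun g => (AddMonoidHom.mulRight (χ g)).comp (Int.castAddHom R)).comp
    MonoidAlgebra.coeffAddEquiv.toAddMonoidHom

theorem weightedAug_single (χ : G → R) (g : G) (a : ℤ) :
    weightedAug χ (MonoidAlgebra.single g a) = a * χ g := by
  simp [weightedAug, MonoidAlgebra.coeffAddEquiv, MonoidAlgebra.coeff_single]

variable [Group G]

theorem weightedAug_of (χ : G → R) (g : G) : weightedAug χ (of ℤ G g) = χ g := by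
  simp [MonoidAlgebra.of_apply, weightedAug_single]

theorem augGen_single_s13 (g : G) (a : ℤ) : augGen G (MonoidAlgebra.single g a) = a := by
  simp [augGen, MonoidAlgebra.lift_single]

theorem augGen_of (g : G) : augGen G (of ℤ G g) = 1 := by
  rw [MonoidAlgebra.of_apply, augGen_single_s13]

theorem weightedAug_mul {χ : G → R} (hχ : ∀ g h, χ (g * h) = χ g + χ h) (r s : MonoidAlgebra ℤ G) :
    weightedAug χ (r * s) = augGen G r * weightedAug χ s + weightedAug χ r * augGen G s := by
  induction r using MonoidAlgebra.induction_linear with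
  | zero => simp
  | add r r' hr hr' => simp only [add_mul, map_add, hr, hr']; push_cast; ring
  | single g a =>
    induction s using MonoidAlgebra.induction_linear with
    | zero => simp
    | add s s' hs hs' => simp only [mul_add, map_add, hs, hs']; push_cast; ring
    | single h b =>
      simp only [MonoidAlgebra.single_mul_single, weightedAug_single, augGen_single_s13, hχ]
      push_cast; ring

theorem weightedAug_mul_of_sub_one {χ : G → R} (hχ : ∀ g h, χ (g * h) = χ g + χ h)
    (r : MonoidAlgebra ℤ G) (t : G) :
    weightedAug χ (r * (of ℤ G t - 1)) = augGen G r * χ t := by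
  have hχ1 : χ 1 = 0 := by simpa using hχ 1 1
  rw [weightedAug_mul hχ, map_sub, map_sub, ← map_one (of ℤ G), weightedAug_of, weightedAug_of,
    augGen_of, augGen_of, hχ1]
  ring

end WeightedAug

section PiMap

variable (p : ℕ)

theorem toAdd_t2_snd : (Multiplicative.toAdd (t2 p)).2 = 1 := rfl

theorem toAdd_t1_pow_snd (k : ℕ) : (Multiplicative.toAdd (t1 p ^ k)).2 = 0 := by
  simp [t1, toAdd_pow]

theorem πmap_eq_weightedAug (v : ↥(A2G12 p)) :
    πmap p v = weightedAug (fun g : G12t p => (Multiplicative.toAdd g).2) (v : R12 p × R12 p).1 :=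
  rfl

def πHom : ↥(A2G12 p) →+ ZMod p :=
  (weightedAug fun g : G12t p => (Multiplicative.toAdd g).2).comp
    ((AddMonoidHom.fst _ _).comp (A2G12 p).subtype.toAddMonoidHom)

theorem πHom_apply (v : ↥(A2G12 p)) : πHom p v = πmap p v := rfl

theorem πmap_add (v w : ↥(A2G12 p)) : πmap p (v + w) = πmap p v + πmap p w := by
  simp only [← πHom_apply, map_add]

theorem πmap_nsmul (n : ℕ) (v : ↥(A2G12 p)) : πmap p (n • v) = n • πmap p v := by
  simp only [← πHom_apply, map_nsmul]

theorem πmap_smul_u12e (r : R12 p) : πmap p (r • u12e p) = augGen _ r := by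
  rw [πmap_eq_weightedAug]
  show weightedAug _ (r * (of ℤ (G12t p) (t2 p) - 1)) = _
  rw [weightedAug_mul_of_sub_one (fun _ _ => rfl), toAdd_t2_snd, mul_one]

theorem πmap_b1e : πmap p (b1e p) = 0 := by
  rw [πmap_eq_weightedAug]
  show weightedAug _ (NN p (t1 p)) = 0
  simp only [NN, map_sum, ← map_pow, weightedAug_of, toAdd_t1_pow_snd, Finset.sum_const_zero]

theorem πmap_smul_b2e (r : R12 p) : πmap p (r • b2e p) = 0 := by
  rw [πmap_eq_weightedAug]
  show weightedAug (fun g : G12t p => (Multiplicative.toAdd g).2) (r * 0) = 0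
  rw [mul_zero, map_zero]

theorem augGen_sum_t1_pow_mul_t2_pow (m n : ℕ) :
    augGen _ (∑ j ∈ Finset.range n, ∑ i ∈ Finset.range m, of ℤ (G12t p) (t1 p ^ i * t2 p ^ j)) =
      n * m := by
  simp only [map_sum, augGen_of, Finset.sum_const, Finset.card_range, nsmul_eq_mul, mul_one]

theorem πmap_smul_umn (r : R12 p) (m1 m2 n1 n2 : ℕ) :
    πmap p (r • umn p m1 m2 n1 n2) = ((augGen _ r * (n2 * m1 - n1 * m2) : ℤ) : ZMod p) := by
  rw [umn, smul_add, smul_smul, smul_smul, πmap_add, πmap_smul_u12e, πmap_smul_u12e,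
    map_mul (augGen _) r, map_mul (augGen _) r, map_neg, map_mul (augGen _) (of _ _ _),
    map_mul (augGen _) (of _ _ _), augGen_of, augGen_of, augGen_sum_t1_pow_mul_t2_pow,
    augGen_sum_t1_pow_mul_t2_pow]
  push_cast; ring

theorem πmap_c12coc [NeZero p] (x y : G12t p) :
    πmap p (c12coc p x y) = -((Multiplicative.toAdd y).1 * (Multiplicative.toAdd x).2) := by
  rw [c12coc, πmap_add, πmap_add, πmap_nsmul, πmap_nsmul, πmap_smul_umn, πmap_b1e,
    πmap_smul_b2e, augGen_of]
  simp

theorem πmap_vH [NeZero p] (H : Subgroup (Gp p)) (x : G12t p) :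
    πmap p (vH p H x) = ∑ᶠ h : ↥(H.map (π12 p)), πmap p (c12coc p x h) := by
  simp only [vH, ← πHom_apply]
  exact map_finsum _ (Set.toFinite _)

end PiMap

theorem statement13_general (p : ℕ) [NeZero p] (hp : p.Prime) (hodd : p ≠ 2)
    (H : Subgroup (Gp p)) (x : G12t p) :
    πmap p (vH p H x) = 0 := by
  have := Fact.mk hp
  simp only [πmap_vH, πmap_c12coc]
  refine finsum_eq_zero_of_map_inv_eq_neg (by rwa [ZMod.ringChar_zmod_n]) _ fun h => ?_
  simp

theorem statement13 (p : ℕ) [NeZero p] (hp : p.Prime) (hodd : p ≠ 2)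
    (H : Subgroup (Gp p)) (hH : H ∈ HH p) (x : G12t p) (hx : x ∈ H.map (π12 p)) :
    πmap p (vH p H x) = 0 :=
  statement13_general p hp hodd H x
end
end
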